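/- arXiv:2009.01201 — 2 statements merged into one kernel-verified Lean document; each statement's English description precedes it below -/
import Mathlib

section
/- The vector v_D satisfies (rec f)(-v_D) + (rec g)(-v_D) = -‖v_D‖², where rec f and rec g are the recession functions of f and g. -/
open scoped InnerProductSpace Pointwise Classical
open Filter Topology

noncomputable section

variable {H : Type*} [NormedAddCommGroup H] [InnerProductSpace ℝ H]

/-- The effective domain of an extended-real-valued function. -/
def fdom {α : Type*} (f : α → EReal) : Set α := {x | f x ≠ ⊤}

/-- The Fenchel conjugate `f*(u) = sup_x (⟪x, u⟫ - f x)`. -/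
def fconj (f : H → EReal) : H → EReal :=
  fun u => ⨆ x : H, ((⟪x, u⟫_ℝ : ℝ) : EReal) - f x

/-- The recession function `(rec f)(y) = sup_{x ∈ dom f} (f (x + y) - f x)`. -/
def recFn (f : H → EReal) : H → EReal :=
  fun y => ⨆ x ∈ fdom f, (f (x + y) - f x)

/-- A proper function: never `-∞` and not identically `+∞`. -/
def ProperFn {α : Type*} (f : α → EReal) : Prop := (∀ x, f x ≠ ⊥) ∧ ∃ x, f x ≠ ⊤

/-- Convexity of an extended-real-valued function, via convexity of its epigraph. -/
def ConvexFn (f : H → EReal) : Prop :=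
  Convex ℝ {p : H × ℝ | f p.1 ≤ (p.2 : EReal)}

/-- `v` is the element of minimum norm of `S`, i.e. `v = P_S 0`, the metric
projection of `0` onto `S`. -/
def IsMinNormPoint (S : Set H) (v : H) : Prop := v ∈ S ∧ ∀ w ∈ S, ‖v‖ ≤ ‖w‖

/-- `p` is the metric projection of `x` onto `S`, i.e. `p = P_S x`. -/
def IsProjOn (S : Set H) (x p : H) : Prop := p ∈ S ∧ ∀ w ∈ S, dist x p ≤ dist x w

/-- The polar cone `S° = {u | ∀ x ∈ S, ⟪x, u⟫ ≤ 0}`. -/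
def polarCone (s : Set H) : Set H := {u | ∀ x ∈ s, ⟪x, u⟫_ℝ ≤ 0}

/-- The recession cone `rec S = {x | ∀ y ∈ S, x + y ∈ S}`. -/
def recCone (s : Set H) : Set H := {x | ∀ y ∈ s, x + y ∈ s}

/-- `p = prox_f w`: `p` minimizes `y ↦ f y + ½‖y - w‖²`. -/
def IsProxOf (f : H → EReal) (w p : H) : Prop :=
  ∀ y : H, f p + ((1 / 2 * ‖p - w‖ ^ 2 : ℝ) : EReal) ≤ f y + ((1 / 2 * ‖y - w‖ ^ 2 : ℝ) : EReal)

/-! For a proper lower semicontinuous convex `f`, the recession function is the support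
function `σ` of `dom f*`. It dominates `⟪y, u⟫` for `u ∈ dom f*` because `f ≥ ⟪·, u⟫ - f* u`
forbids `f` to grow along `y` at a slower rate than `⟪y, u⟫`; it is dominated by the support
function by the Fenchel–Moreau inequality `f ≤ f**`, proved by separating points below the graph
from the closed convex epigraph. Support functions add over Minkowski sums and do not see
closures, so the left-hand side is `σ_C (-v_D)` with `C = cl (dom f* + dom g*)`, and the
variational inequality `⟪v_D, w - v_D⟫ ≥ 0` for `w ∈ C` characterising `v_D = P_C 0` gives
`σ_C (-v_D) = -‖v_D‖²`. -/

def supportFn (s : Set H) (y : H) : EReal := ⨆ u ∈ s, ((⟪y, u⟫_ℝ : ℝ) : EReal)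

theorem inner_le_supportFn {s : Set H} {u : H} (hu : u ∈ s) (y : H) :
    ((⟪y, u⟫_ℝ : ℝ) : EReal) ≤ supportFn s y :=
  le_iSup₂ (f := fun u _ => ((⟪y, u⟫_ℝ : ℝ) : EReal)) u hu

theorem supportFn_add (s t : Set H) (y : H) :
    supportFn (s + t) y = supportFn s y + supportFn t y := by
  refine le_antisymm (iSup₂_le ?_) (EReal.add_le_of_forall_lt fun a ha b hb => ?_)
  · rintro _ ⟨u, hu, w, hw, rfl⟩
    rw [inner_add_right, EReal.coe_add]
    exact add_le_add (inner_le_supportFn hu y) (inner_le_supportFn hw y)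
  · obtain ⟨u, hu, hau⟩ := lt_biSup_iff.1 ha
    obtain ⟨w, hw, hbw⟩ := lt_biSup_iff.1 hb
    calc a + b ≤ ((⟪y, u⟫_ℝ : ℝ) : EReal) + ((⟪y, w⟫_ℝ : ℝ) : EReal) := add_le_add hau.le hbw.le
      _ = ((⟪y, u + w⟫_ℝ : ℝ) : EReal) := by rw [inner_add_right, EReal.coe_add]
      _ ≤ supportFn (s + t) y := inner_le_supportFn (Set.add_mem_add hu hw) y

theorem supportFn_closure (s : Set H) (y : H) : supportFn (closure s) y = supportFn s y := by
  refine le_antisymm (iSup₂_le fun u hu => ?_) (biSup_mono fun u hu => subset_closure hu)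
  have hcont : Continuous fun u => ((⟪y, u⟫_ℝ : ℝ) : EReal) :=
    continuous_coe_real_ereal.comp (continuous_const.inner continuous_id)
  exact closure_minimal (fun u hu => inner_le_supportFn hu y)
    (isClosed_le hcont continuous_const) hu

theorem IsMinNormPoint.supportFn_neg {C : Set H} (hC : Convex ℝ C) {v : H}
    (hv : IsMinNormPoint C v) : supportFn C (-v) = ((-‖v‖ ^ 2 : ℝ) : EReal) := by
  have : Nonempty C := ⟨⟨v, hv.1⟩⟩
  have hinf : ‖0 - v‖ = ⨅ w : C, ‖0 - (w : H)‖ := by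
    refine le_antisymm (le_ciInf fun w => by simpa using hv.2 w w.2) ?_
    exact ciInf_le ⟨0, by rintro _ ⟨w, rfl⟩; positivity⟩ (⟨v, hv.1⟩ : C)
  have hvar := (norm_eq_iInf_iff_real_inner_le_zero hC hv.1).1 hinf
  refine le_antisymm (iSup₂_le fun u hu => ?_) ?_
  · have := hvar u hu
    rw [zero_sub, inner_neg_left, inner_sub_right, real_inner_self_eq_norm_sq] at this
    rw [EReal.coe_le_coe_iff, inner_neg_left]
    linarith
  · simpa [real_inner_self_eq_norm_sq] using inner_le_supportFn hv.1 (-v)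

theorem mem_fdom_iff_exists_le {α : Type*} {φ : α → EReal} {x : α} :
    x ∈ fdom φ ↔ ∃ a : ℝ, φ x ≤ a := by
  refine ⟨fun hx => ?_, fun ⟨a, ha⟩ => ne_top_of_le_ne_top (EReal.coe_ne_top a) ha⟩
  obtain ⟨a, ha, -⟩ := EReal.lt_iff_exists_real_btwn.1 (lt_top_iff_ne_top.2 hx)
  exact ⟨a, ha.le⟩

theorem ProperFn.exists_eq_coe {α : Type*} {φ : α → EReal} (hφ : ProperFn φ) {x : α}
    (hx : x ∈ fdom φ) : ∃ ρ : ℝ, φ x = ρ :=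
  ⟨(φ x).toReal, (EReal.coe_toReal hx (hφ.1 x)).symm⟩

theorem LowerSemicontinuous.isClosed_setOf_le_coe {α : Type*} [TopologicalSpace α]
    {φ : α → EReal} (hφ : LowerSemicontinuous φ) : IsClosed {p : α × ℝ | φ p.1 ≤ p.2} :=
  hφ.isClosed_epigraph.preimage
    (continuous_fst.prodMk (continuous_coe_real_ereal.comp continuous_snd))

theorem ContinuousLinearMap.exists_eq_inner_add_mul [CompleteSpace H] (φ : H × ℝ →L[ℝ] ℝ) :
    ∃ (w : H) (s : ℝ), ∀ x t, φ (x, t) = ⟪x, w⟫_ℝ + s * t := by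
  refine ⟨(InnerProductSpace.toDual ℝ H).symm (φ.comp (.inl ℝ H ℝ)), φ (0, 1), fun x t => ?_⟩
  rw [real_inner_comm, InnerProductSpace.toDual_symm_apply, mul_comm, ← smul_eq_mul, ← map_smul,
    ContinuousLinearMap.comp_apply, ContinuousLinearMap.inl_apply, ← map_add]
  simp

section Conjugate

variable {f : H → EReal}

theorem inner_sub_le_fconj (f : H → EReal) (x u : H) :
    ((⟪x, u⟫_ℝ : ℝ) : EReal) - f x ≤ fconj f u :=
  le_iSup (fun x => ((⟪x, u⟫_ℝ : ℝ) : EReal) - f x) x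

theorem inner_le_of_fconj_le {x u : H} {a t : ℝ} (hu : fconj f u ≤ a) (hx : f x ≤ t) :
    ⟪x, u⟫_ℝ ≤ a + t := by
  have := (EReal.sub_le_sub le_rfl hx).trans ((inner_sub_le_fconj f x u).trans hu)
  rw [← EReal.coe_sub, EReal.coe_le_coe_iff] at this
  linarith

theorem fconj_le_of_inner_le {u : H} {a : ℝ} (h : ∀ x (t : ℝ), f x ≤ t → ⟪x, u⟫_ℝ ≤ a + t) :
    fconj f u ≤ a := by
  refine iSup_le fun x => ?_
  rw [EReal.sub_le_iff_le_add (.inr (EReal.coe_ne_top a)) (.inr (EReal.coe_ne_bot a))]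
  induction hfx : f x using EReal.rec with
  | bot => linarith [h x (⟪x, u⟫_ℝ - a - 1) (hfx ▸ bot_le)]
  | coe t => exact_mod_cast h x t hfx.le
  | top => simp

theorem convex_fdom_fconj (f : H → EReal) : Convex ℝ (fdom (fconj f)) := by
  intro u hu u' hu' α β hα hβ hαβ
  obtain ⟨a, ha⟩ := mem_fdom_iff_exists_le.1 hu
  obtain ⟨a', ha'⟩ := mem_fdom_iff_exists_le.1 hu'
  refine mem_fdom_iff_exists_le.2 ⟨α * a + β * a', fconj_le_of_inner_le fun x t hx => ?_⟩
  have h := mul_le_mul_of_nonneg_left (inner_le_of_fconj_le ha hx) hα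
  have h' := mul_le_mul_of_nonneg_left (inner_le_of_fconj_le ha' hx) hβ
  rw [inner_add_right, real_inner_smul_right, real_inner_smul_right]
  linear_combination h + h' + t * hαβ

theorem fconj_smul_le_of_separation {w : H} {s c : ℝ} (hs : 0 < s)
    (hC : ∀ x (t : ℝ), f x ≤ t → c < ⟪x, w⟫_ℝ + s * t) :
    fconj f ((-s⁻¹) • w) ≤ ((-(c / s) : ℝ) : EReal) :=
  fconj_le_of_inner_le fun x t hx => by
    have := hC x t hx
    have hgap : -(c / s) + t - -s⁻¹ * ⟪x, w⟫_ℝ = (⟪x, w⟫_ℝ + s * t - c) / s := by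
      field_simp
      ring
    rw [real_inner_smul_right, ← sub_nonneg, hgap]
    exact div_nonneg (by linarith) hs.le

theorem fconj_sub_smul_le_of_separation {u w : H} {a c r : ℝ} (hu : fconj f u ≤ a) (hr : 0 ≤ r)
    (hC : ∀ x (t : ℝ), f x ≤ t → c < ⟪x, w⟫_ℝ) : fconj f (u - r • w) ≤ ((a - r * c : ℝ) : EReal) :=
  fconj_le_of_inner_le fun x t hx => by
    have := mul_le_mul_of_nonneg_left (hC x t hx).le hr
    rw [inner_sub_right, real_inner_smul_right]
    linarith [inner_le_of_fconj_le hu hx]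

end Conjugate

section FenchelMoreau

variable [CompleteSpace H] {f : H → EReal}

theorem exists_affine_separation_of_lt (hf_prop : ProperFn f) (hf_lsc : LowerSemicontinuous f)
    (hf_cvx : ConvexFn f) {z : H} {β : ℝ} (hz : (β : EReal) < f z) :
    ∃ (w : H) (s c : ℝ), 0 ≤ s ∧ ⟪z, w⟫_ℝ + s * β < c ∧
      ∀ x (t : ℝ), f x ≤ t → c < ⟪x, w⟫_ℝ + s * t := by
  obtain ⟨φ, c, hφz, hφC⟩ :=
    geometric_hahn_banach_point_closed hf_cvx hf_lsc.isClosed_setOf_le_coe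
      (show (z, β) ∉ {p : H × ℝ | f p.1 ≤ p.2} from hz.not_ge)
  obtain ⟨w, s, hφ⟩ := φ.exists_eq_inner_add_mul
  have hC : ∀ x (t : ℝ), f x ≤ t → c < ⟪x, w⟫_ℝ + s * t := fun x t hx => hφ x t ▸ hφC (x, t) hx
  refine ⟨w, s, c, ?_, hφ z β ▸ hφz, hC⟩
  -- the epigraph contains vertical half-lines, on which `φ` stays above `c`
  obtain ⟨x₀, hx₀⟩ := hf_prop.2
  obtain ⟨t₀, ht₀⟩ := mem_fdom_iff_exists_le.1 hx₀
  by_contra! hs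
  obtain ⟨n, hn⟩ := exists_nat_gt ((⟪x₀, w⟫_ℝ + s * t₀ - c) / -s)
  rw [div_lt_iff₀ (neg_pos.2 hs)] at hn
  have := hC x₀ (t₀ + n) (ht₀.trans (by exact_mod_cast le_add_of_nonneg_right n.cast_nonneg))
  linarith

theorem fdom_fconj_nonempty (hf_prop : ProperFn f) (hf_lsc : LowerSemicontinuous f)
    (hf_cvx : ConvexFn f) : (fdom (fconj f)).Nonempty := by
  obtain ⟨x₀, hx₀⟩ := hf_prop.2
  obtain ⟨t₀, ht₀⟩ := hf_prop.exists_eq_coe hx₀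
  obtain ⟨w, s, c, -, hlt, hC⟩ := exists_affine_separation_of_lt hf_prop hf_lsc hf_cvx (β := t₀ - 1)
    (by rw [ht₀]; exact_mod_cast sub_one_lt t₀)
  have hs : 0 < s := by linarith [hC x₀ t₀ ht₀.le]
  exact ⟨_, mem_fdom_iff_exists_le.2 ⟨_, fconj_smul_le_of_separation hs hC⟩⟩

theorem le_fconj_fconj (hf_prop : ProperFn f) (hf_lsc : LowerSemicontinuous f)
    (hf_cvx : ConvexFn f) (z : H) : f z ≤ fconj (fconj f) z := by
  by_contra! h
  obtain ⟨β, hβ, hβz⟩ := EReal.lt_iff_exists_real_btwn.1 h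
  obtain ⟨w, s, c, hs, hz, hC⟩ := exists_affine_separation_of_lt hf_prop hf_lsc hf_cvx hβz
  suffices ∃ (u : H) (a : ℝ), fconj f u ≤ a ∧ β ≤ ⟪u, z⟫_ℝ - a by
    obtain ⟨u, a, hu, hβu⟩ := this
    refine hβ.not_ge ((EReal.coe_le_coe_iff.2 hβu).trans ?_)
    rw [EReal.coe_sub]
    exact (EReal.sub_le_sub le_rfl hu).trans (inner_sub_le_fconj (fconj f) u z)
  rcases hs.eq_or_lt with rfl | hs
  · -- a vertical hyperplane: tilt an affine minorant of `f` along it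
    simp only [zero_mul, add_zero] at hz hC
    obtain ⟨u₀, hu₀⟩ := fdom_fconj_nonempty hf_prop hf_lsc hf_cvx
    obtain ⟨a₀, ha₀⟩ := mem_fdom_iff_exists_le.1 hu₀
    obtain ⟨n, hn⟩ := exists_nat_gt ((β - ⟪u₀, z⟫_ℝ + a₀) / (c - ⟪z, w⟫_ℝ))
    rw [div_lt_iff₀ (sub_pos.2 hz)] at hn
    refine ⟨_, _, fconj_sub_smul_le_of_separation ha₀ n.cast_nonneg hC, ?_⟩
    rw [inner_sub_left, real_inner_smul_left, real_inner_comm z w]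
    linarith
  · refine ⟨_, _, fconj_smul_le_of_separation hs hC, ?_⟩
    have hgap : -s⁻¹ * ⟪z, w⟫_ℝ - -(c / s) = (c - ⟪z, w⟫_ℝ) / s := by
      field_simp
      ring
    rw [real_inner_smul_left, real_inner_comm z w, hgap, le_div_iff₀ hs]
    linarith

end FenchelMoreau

section RecessionStep

variable {E : Type*} [NormedAddCommGroup E] {f : E → EReal}

theorem le_add_of_recFn_le (hf_prop : ProperFn f) {x y : E} {r t : ℝ} (h : recFn f y ≤ r)
    (hx : f x ≤ t) : f (x + y) ≤ ((t + r : ℝ) : EReal) := by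
  have hdom : x ∈ fdom f := ne_top_of_le_ne_top (EReal.coe_ne_top t) hx
  obtain ⟨ρ, hρ⟩ := hf_prop.exists_eq_coe hdom
  have hstep := (le_iSup₂ (f := fun x _ => f (x + y) - f x) x hdom).trans h
  rw [hρ, EReal.sub_le_iff_le_add (.inl (EReal.coe_ne_bot ρ)) (.inl (EReal.coe_ne_top ρ)),
    ← EReal.coe_add] at hstep
  rw [hρ, EReal.coe_le_coe_iff] at hx
  exact hstep.trans (EReal.coe_le_coe_iff.2 (by linarith))

theorem le_add_nsmul_of_recFn_le (hf_prop : ProperFn f) {x y : E} {r t : ℝ} (h : recFn f y ≤ r)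
    (hx : f x ≤ t) (n : ℕ) : f (x + n • y) ≤ ((t + n * r : ℝ) : EReal) := by
  induction n with
  | zero => simpa using hx
  | succ n ih =>
    convert le_add_of_recFn_le hf_prop h ih using 2
    · rw [succ_nsmul, add_assoc]
    · push_cast
      ring

end RecessionStep

section Recession

variable {f : H → EReal}

theorem supportFn_fdom_fconj_le_recFn (hf_prop : ProperFn f) (y : H) :
    supportFn (fdom (fconj f)) y ≤ recFn f y := by
  refine iSup₂_le fun u hu => ?_
  by_contra! h
  obtain ⟨r, hr, hru⟩ := EReal.lt_iff_exists_real_btwn.1 h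
  rw [EReal.coe_lt_coe_iff] at hru
  obtain ⟨a, ha⟩ := mem_fdom_iff_exists_le.1 hu
  obtain ⟨x₀, hx₀⟩ := hf_prop.2
  obtain ⟨t₀, ht₀⟩ := mem_fdom_iff_exists_le.1 hx₀
  -- `⟪x₀ + n • y, u⟫` outgrows the bound `f (x₀ + n • y) ≤ t₀ + n * r`
  obtain ⟨n, hn⟩ := exists_nat_gt ((a + t₀ - ⟪x₀, u⟫_ℝ) / (⟪y, u⟫_ℝ - r))
  rw [div_lt_iff₀ (sub_pos.2 hru)] at hn
  have := inner_le_of_fconj_le ha (le_add_nsmul_of_recFn_le hf_prop hr.le ht₀ n)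
  rw [inner_add_left, ← Nat.cast_smul_eq_nsmul ℝ, real_inner_smul_left] at this
  linarith

theorem recFn_le_supportFn_fdom_fconj [CompleteSpace H] (hf_prop : ProperFn f)
    (hf_lsc : LowerSemicontinuous f) (hf_cvx : ConvexFn f) (y : H) :
    recFn f y ≤ supportFn (fdom (fconj f)) y := by
  refine iSup₂_le fun x hx => ?_
  obtain ⟨ρ, hρ⟩ := hf_prop.exists_eq_coe hx
  rw [hρ, EReal.sub_le_iff_le_add (.inl (EReal.coe_ne_bot ρ)) (.inl (EReal.coe_ne_top ρ))]
  refine (le_fconj_fconj hf_prop hf_lsc hf_cvx (x + y)).trans (iSup_le fun u => ?_)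
  by_cases hu : u ∈ fdom (fconj f)
  · have hyoung : ((⟪x, u⟫_ℝ - ρ : ℝ) : EReal) ≤ fconj f u := by
      simpa [hρ] using inner_sub_le_fconj f x u
    calc ((⟪u, x + y⟫_ℝ : ℝ) : EReal) - fconj f u
        ≤ ((⟪u, x + y⟫_ℝ : ℝ) : EReal) - ((⟪x, u⟫_ℝ - ρ : ℝ) : EReal) :=
          EReal.sub_le_sub le_rfl hyoung
      _ = ((⟪y, u⟫_ℝ : ℝ) : EReal) + ρ := by
          rw [← EReal.coe_sub, ← EReal.coe_add, inner_add_right, real_inner_comm x u,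
            real_inner_comm y u]
          ring_nf
      _ ≤ supportFn (fdom (fconj f)) y + ρ := by gcongr; exact inner_le_supportFn hu y
  · rw [show fconj f u = ⊤ from not_not.1 hu, EReal.sub_top]
    exact bot_le

theorem recFn_eq_supportFn_fdom_fconj [CompleteSpace H] (hf_prop : ProperFn f)
    (hf_lsc : LowerSemicontinuous f) (hf_cvx : ConvexFn f) (y : H) :
    recFn f y = supportFn (fdom (fconj f)) y :=
  (recFn_le_supportFn_fdom_fconj hf_prop hf_lsc hf_cvx y).antisymm
    (supportFn_fdom_fconj_le_recFn hf_prop y)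

end Recession

theorem douglasRachford_vD_recession_identity {H : Type*} [NormedAddCommGroup H] [InnerProductSpace ℝ H]
    [FiniteDimensional ℝ H]
    (f g : H → EReal)
    (hf_prop : ProperFn f) (hf_lsc : LowerSemicontinuous f) (hf_cvx : ConvexFn f)
    (hg_prop : ProperFn g) (hg_lsc : LowerSemicontinuous g) (hg_cvx : ConvexFn g)
    (vD : H) (hvD : IsMinNormPoint (closure (fdom (fconj f) + fdom (fconj g))) vD)
    : recFn f (-vD) + recFn g (-vD) = ((-‖vD‖ ^ 2 : ℝ) : EReal) := by
  have hconv : Convex ℝ (closure (fdom (fconj f) + fdom (fconj g))) :=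
    ((convex_fdom_fconj f).add (convex_fdom_fconj g)).closure
  rw [recFn_eq_supportFn_fdom_fconj hf_prop hf_lsc hf_cvx,
    recFn_eq_supportFn_fdom_fconj hg_prop hg_lsc hg_cvx, ← supportFn_add, ← supportFn_closure,
    hvD.supportFn_neg hconv]

end
end

section
/- The vector -v_P belongs to (rec(cl dom f))° ∩ (rec(-cl dom g))°, i.e., -v_P lies in the polar cone of the recession cone of cl(dom f) and in the polar cone of the recession cone of -cl(dom g). -/
/-!
The domains of `f` and `g` are convex, so `C = cl(dom f - dom g)` is a closed convex set and
`v_P` is the projection of `0` onto it; the variational inequality of the projection gives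
`⟪d, v_P⟫ ≥ 0` for every recession direction `d` of `C`. Both recession cones in the statement
lie in `rec C`, since translating `cl(dom f)` (resp. `-cl(dom g)`) along them keeps `C` in place.
-/

open scoped InnerProductSpace Pointwise Classical
open Filter Topology

noncomputable section

variable {H : Type*} [NormedAddCommGroup H] [InnerProductSpace ℝ H]

open Set

section Recession

variable {E : Type*} [NormedAddCommGroup E] {s t : Set E}

theorem recCone_closure_subset_closure_add_left :
    recCone (closure s) ⊆ recCone (closure (s + t)) := by
  intro d hd y hy
  have htranslate : MapsTo (d + ·) (s + t) (closure (s + t)) := by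
    rintro _ ⟨a, ha, b, hb, rfl⟩
    show d + (a + b) ∈ _
    rw [← add_assoc]
    exact map_mem_closure₂ continuous_add (hd a (subset_closure ha)) (subset_closure hb)
      fun a ha b hb => add_mem_add ha hb
  simpa only [closure_closure] using map_mem_closure (continuous_const_add d) hy htranslate

theorem recCone_closure_subset_closure_add_right :
    recCone (closure t) ⊆ recCone (closure (s + t)) := by
  rw [add_comm]
  exact recCone_closure_subset_closure_add_left

end Recession

theorem ConvexFn.convex_fdom {f : H → EReal} (hf : ConvexFn f) : Convex ℝ (fdom f) := by
  have hdom : fdom f = Prod.fst '' {p : H × ℝ | f p.1 ≤ (p.2 : EReal)} := by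
    ext x
    refine ⟨fun hx => ?_, ?_⟩
    · obtain ⟨r, hr⟩ : ∃ r : ℝ, f x ≤ r := ⟨(f x).toReal, EReal.le_coe_toReal hx⟩
      exact ⟨(x, r), hr, rfl⟩
    · rintro ⟨⟨x, r⟩, hr, rfl⟩
      exact ne_top_of_le_ne_top (EReal.coe_ne_top r) hr
  rw [hdom]
  exact hf.linear_image (LinearMap.fst ℝ H ℝ)

theorem polarCone_anti {s t : Set H} (h : s ⊆ t) : polarCone t ⊆ polarCone s :=
  fun _ hu x hx => hu x (h hx)

theorem IsMinNormPoint.inner_sub_nonneg {K : Set H} {v w : H} (hK : Convex ℝ K)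
    (hv : IsMinNormPoint K v) (hw : w ∈ K) : 0 ≤ ⟪w - v, v⟫_ℝ := by
  have : Nonempty K := ⟨⟨v, hv.1⟩⟩
  have hinf : ‖(0 : H) - v‖ = ⨅ w : K, ‖(0 : H) - w‖ :=
    le_antisymm (le_ciInf fun w => by simpa using hv.2 w w.2)
      (ciInf_le ⟨0, by rintro _ ⟨w, rfl⟩; positivity⟩ (⟨v, hv.1⟩ : K))
  have hvar := (norm_eq_iInf_iff_real_inner_le_zero hK hv.1).1 hinf w hw
  rw [zero_sub, inner_neg_left, real_inner_comm] at hvar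
  linarith

theorem IsMinNormPoint.neg_mem_polarCone_recCone {K : Set H} {v : H} (hK : Convex ℝ K)
    (hv : IsMinNormPoint K v) : -v ∈ polarCone (recCone K) := by
  intro d hd
  simpa only [inner_neg_right, neg_nonpos, add_sub_cancel_right] using
    hv.inner_sub_nonneg hK (hd v hv.1)

theorem neg_vP_mem_polar_recCones_general {H : Type*} [NormedAddCommGroup H] [InnerProductSpace ℝ H]
    (f g : H → EReal)
    (hf_cvx : ConvexFn f)
    (hg_cvx : ConvexFn g)
    (vP : H) (hvP : IsMinNormPoint (closure (fdom f - fdom g)) vP)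
    : -vP ∈ polarCone (recCone (closure (fdom f))) ∩ polarCone (recCone (-closure (fdom g))) := by
  have hconvex : Convex ℝ (closure (fdom f - fdom g)) :=
    (hf_cvx.convex_fdom.sub hg_cvx.convex_fdom).closure
  have hpolar := hvP.neg_mem_polarCone_recCone hconvex
  rw [sub_eq_add_neg] at hpolar
  rw [neg_closure]
  exact ⟨polarCone_anti recCone_closure_subset_closure_add_left hpolar,
    polarCone_anti recCone_closure_subset_closure_add_right hpolar⟩

theorem neg_vP_mem_polar_recCones {H : Type*} [NormedAddCommGroup H] [InnerProductSpace ℝ H]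
    [FiniteDimensional ℝ H]
    (f g : H → EReal)
    (hf_prop : ProperFn f) (hf_lsc : LowerSemicontinuous f) (hf_cvx : ConvexFn f)
    (hg_prop : ProperFn g) (hg_lsc : LowerSemicontinuous g) (hg_cvx : ConvexFn g)
    (vP : H) (hvP : IsMinNormPoint (closure (fdom f - fdom g)) vP)
    : -vP ∈ polarCone (recCone (closure (fdom f))) ∩ polarCone (recCone (-closure (fdom g))) :=
  neg_vP_mem_polar_recCones_general f g hf_cvx hg_cvx vP hvP

end
end
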